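/- arXiv:1504.00274 — 7 statements merged into one kernel-verified Lean document; each statement's English description precedes it below -/
import Mathlib

section
/- Let n ≥ 1 and let a_1, ..., a_n be complex numbers. Then (-1)^n/n! · H_n(a_1, ..., a_n) equals the determinant of the n×n upper Hessenberg matrix M whose entries (with rows and columns indexed 1, ..., n) are M_{i,j} = a_i^{j-i+1}/(j-i+1)! whenever j ≥ i-1 (so in particular the subdiagonal entries M_{i,i-1} = 1 and the first row is a_1^j/j!), and M_{i,j} = 0 whenever j < i-1. -/
open Polynomial

/-!
Expand the determinant along the first row. Deleting the first row and the column `k + 1` of an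
upper Hessenberg matrix with unit subdiagonal leaves a block upper triangular matrix, whose
diagonal blocks are a unitriangular `k × k` matrix and the Hessenberg matrix of the last
`n - k - 1` rows. Hence these determinants obey the recurrence
`D(a₁, …, aₙ) = ∑ₖ (-1)ᵏ a₁ᵏ⁺¹/(k+1)! · D(aₖ₊₂, …, aₙ)`, which is exactly the defining recurrence
of `Hlev` after multiplying by `(-1)ⁿ/n!`.
-/

/-- The Levinson polynomials `H_n`, defined by `H_0 = 1` and, for `n ≥ 1`,
`H_n(a_1, ..., a_n) = -n! · Σ_{k=1}^{n} (a_1^k / k!) · H_{n-k}(a_{k+1}, ..., a_n) / (n-k)!`. -/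
noncomputable def Hlev : (n : ℕ) → (Fin n → ℂ) → ℂ
  | 0, _ => 1
  | n + 1, a =>
      -((n + 1).factorial : ℂ) * ∑ k ∈ Finset.range (n + 1),
        (a 0 ^ (k + 1) / ((k + 1).factorial : ℂ)) *
          Hlev (n - k) (fun i => a ⟨k + 1 + i.1, by have := i.isLt; omega⟩) /
            ((n - k).factorial : ℂ)
  termination_by n _ => n
  decreasing_by omega

namespace Matrix

section
variable {R : Type*} [Zero R]

def hessenberg {n : ℕ} (c : Fin n → ℕ → R) : Matrix (Fin n) (Fin n) R :=
  of fun i j => if (i : ℕ) ≤ j + 1 then c i (j + 1 - i) else 0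

theorem hessenberg_apply {n : ℕ} (c : Fin n → ℕ → R) (i j : Fin n) :
    hessenberg c i j = if (i : ℕ) ≤ j + 1 then c i (j + 1 - i) else 0 := rfl

end

variable {R : Type*} [CommRing R]

theorem det_submatrix_succ_succAbove_hessenberg {m : ℕ} (c : Fin (m + 1) → ℕ → R)
    (hc : ∀ i : Fin m, c i.succ 0 = 1) (j : Fin (m + 1)) :
    ((hessenberg c).submatrix Fin.succ j.succAbove).det =
      (hessenberg fun i : Fin (m - j) => c ⟨j + 1 + i, by omega⟩).det := by
  have hj : (j : ℕ) + (m - j) = m := by omega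
  let e : Fin j ⊕ Fin (m - j) ≃ Fin m := finSumFinEquiv.trans (finCongr hj)
  have hrow₁ (r : Fin j) : (e (.inl r)).succ = ⟨r + 1, by omega⟩ := by ext; simp [e]
  have hrow₂ (r : Fin (m - j)) : (e (.inr r)).succ = ⟨j + 1 + r, by omega⟩ := by
    ext; simp [e]; omega
  have hcol₁ (r : Fin j) : j.succAbove (e (.inl r)) = ⟨r, by omega⟩ := by
    rw [Fin.succAbove_of_castSucc_lt] <;> simp [e, Fin.lt_def, Fin.ext_iff]
  have hcol₂ (r : Fin (m - j)) : j.succAbove (e (.inr r)) = ⟨j + 1 + r, by omega⟩ := by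
    rw [Fin.succAbove_of_le_castSucc] <;> simp [e, Fin.le_def, Fin.ext_iff]; omega
  rw [← det_submatrix_equiv_self e]
  set P := ((hessenberg c).submatrix Fin.succ j.succAbove).submatrix e e
  have h₁₁ : P.toBlocks₁₁.det = 1 := by
    rw [det_of_isUpperTriangular]
    · refine Finset.prod_eq_one fun r _ => ?_
      simp only [P, toBlocks₁₁, of_apply, submatrix_apply, hrow₁, hcol₁, hessenberg_apply]
      rw [if_pos le_rfl, Nat.sub_self, ← hrow₁, hc]
    · intro r s hrs
      have : (s : ℕ) < r := hrs
      simp only [P, toBlocks₁₁, of_apply, submatrix_apply, hrow₁, hcol₁, hessenberg_apply]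
      exact if_neg (by omega)
  have h₂₁ : P.toBlocks₂₁ = 0 := by
    ext r s
    simp only [P, toBlocks₂₁, of_apply, submatrix_apply, hrow₂, hcol₁, hessenberg_apply, zero_apply]
    exact if_neg (by omega)
  have h₂₂ : P.toBlocks₂₂ = hessenberg fun i : Fin (m - j) => c ⟨j + 1 + i, by omega⟩ := by
    ext r s
    simp only [P, toBlocks₂₂, of_apply, submatrix_apply, hrow₂, hcol₂, hessenberg_apply]
    rw [show (j : ℕ) + 1 + s + 1 - (j + 1 + r) = s + 1 - r by omega]
    simp only [add_assoc, Nat.add_le_add_iff_left]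
  rw [← fromBlocks_toBlocks P, h₂₁, det_fromBlocks_zero₂₁, h₁₁, h₂₂, one_mul]

theorem det_hessenberg_succ {m : ℕ} (c : Fin (m + 1) → ℕ → R)
    (hc : ∀ i : Fin m, c i.succ 0 = 1) :
    (hessenberg c).det = ∑ k ∈ Finset.range (m + 1),
      (-1) ^ k * c 0 (k + 1) * (hessenberg fun i : Fin (m - k) => c ⟨k + 1 + i, by omega⟩).det := by
  rw [det_succ_row_zero, ← Fin.sum_univ_eq_sum_range]
  refine Fintype.sum_congr _ _ fun j => ?_
  rw [det_submatrix_succ_succAbove_hessenberg c hc, hessenberg_apply, if_pos (by simp)]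
  rfl

end Matrix

theorem neg_one_pow_div_factorial_mul_Hlev_succ (m : ℕ) (a : Fin (m + 1) → ℂ) :
    (-1) ^ (m + 1) / ((m + 1).factorial : ℂ) * Hlev (m + 1) a =
      ∑ k ∈ Finset.range (m + 1), (-1 : ℂ) ^ k * (a 0 ^ (k + 1) / ((k + 1).factorial : ℂ)) *
        ((-1) ^ (m - k) / ((m - k).factorial : ℂ) *
          Hlev (m - k) fun i => a ⟨k + 1 + i, by omega⟩) := by
  rw [Hlev, Finset.mul_sum, Finset.mul_sum]
  refine Finset.sum_congr rfl fun k hk => ?_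
  have hsign : (-1 : ℂ) ^ (m + 1) = -((-1) ^ k * (-1) ^ (m - k)) := by
    rw [← pow_add, Nat.add_sub_cancel' (Finset.mem_range_succ_iff.mp hk), pow_succ, mul_neg_one]
  rw [hsign]
  have hfact : ((m + 1).factorial : ℂ) ≠ 0 := Nat.cast_ne_zero.mpr (Nat.factorial_ne_zero _)
  field_simp

theorem neg_one_pow_div_factorial_mul_Hlev (n : ℕ) (a : Fin n → ℂ) :
    (-1) ^ n / (n.factorial : ℂ) * Hlev n a =
      (Matrix.hessenberg fun i k => a i ^ k / (k.factorial : ℂ)).det := by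
  induction n using Nat.strong_induction_on with
  | _ n ih =>
    match n with
    | 0 => simp [Hlev]
    | m + 1 =>
      rw [neg_one_pow_div_factorial_mul_Hlev_succ, Matrix.det_hessenberg_succ _ (by simp)]
      refine Finset.sum_congr rfl fun k _ => ?_
      rw [ih (m - k) (by omega)]

theorem stmt0_general (n : ℕ) (a : Fin n → ℂ) :
    (-1 : ℂ) ^ n / (n.factorial : ℂ) * Hlev n a =
      Matrix.det (Matrix.of fun i j : Fin n =>
        if (i : ℕ) ≤ (j : ℕ) + 1 then
          a i ^ ((j : ℕ) + 1 - (i : ℕ)) / ((((j : ℕ) + 1 - (i : ℕ)).factorial : ℂ))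
        else 0) :=
  neg_one_pow_div_factorial_mul_Hlev n a

theorem stmt0 (n : ℕ) (hn : 1 ≤ n) (a : Fin n → ℂ) :
    (-1 : ℂ) ^ n / (n.factorial : ℂ) * Hlev n a =
      Matrix.det (Matrix.of fun i j : Fin n =>
        if (i : ℕ) ≤ (j : ℕ) + 1 then
          a i ^ ((j : ℕ) + 1 - (i : ℕ)) / ((((j : ℕ) + 1 - (i : ℕ)).factorial : ℂ))
        else 0) :=
  stmt0_general n a
end

section
/- Let n ≥ 1 and let a_1, ..., a_n be complex numbers. Then H_n(a_1, ..., a_n) = (-1)^n times the determinant of the n×n upper Hessenberg matrix N whose entries (with rows and columns indexed 1, ..., n) are N_{i,j} = binom(j, i-1) · a_i^{j-i+1} whenever j ≥ i-1 (so the subdiagonal entries N_{i,i-1} = 1 and the first row is a_1^j), and N_{i,j} = 0 whenever j < i-1. -/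
open Polynomial

noncomputable def Nmat (j m : ℕ) (b : ℕ → ℂ) : Matrix (Fin m) (Fin m) ℂ :=
  Matrix.of fun p q => if (p : ℕ) ≤ (q : ℕ) + 1 then
    ((( j + (q:ℕ) + 1).choose (j + (p:ℕ)) : ℕ) : ℂ) * b (p:ℕ) ^ ((q:ℕ) + 1 - (p:ℕ)) else 0

lemma succAbove_val {m : ℕ} (q : Fin (m+1)) (w : Fin m) :
    ((q.succAbove w : Fin (m+1)) : ℕ) = if (w:ℕ) < (q:ℕ) then (w:ℕ) else (w:ℕ)+1 := by
  rcases lt_or_ge ((w:ℕ)) (q:ℕ) with h | h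
  · rw [Fin.succAbove_of_castSucc_lt q w (by simpa [Fin.lt_def] using h)]
    simp [h]
  · rw [Fin.succAbove_of_le_castSucc q w (by simpa [Fin.le_def] using h)]
    simp [Nat.not_lt.mpr h]

lemma minor_det (j m : ℕ) (b : ℕ → ℂ) (q : Fin (m+1)) :
    ((Nmat j (m+1) b).submatrix Fin.succ q.succAbove).det
      = (Nmat (j + (q:ℕ) + 1) (m - (q:ℕ)) (fun i => b ((q:ℕ) + 1 + i))).det := by
  have hq : (q:ℕ) ≤ m := Nat.lt_succ_iff.mp q.isLt
  have hm : (q:ℕ) + (m - (q:ℕ)) = m := by omega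
  let g : Fin (q:ℕ) ⊕ Fin (m - (q:ℕ)) ≃ Fin m := finSumFinEquiv.trans (finCongr hm)
  rw [← Matrix.det_submatrix_equiv_self g]
  set T : Matrix (Fin (q:ℕ)) (Fin (q:ℕ)) ℂ := Matrix.of fun p c =>
    if (p:ℕ) ≤ (c:ℕ) then (((j+(c:ℕ)+1).choose (j+(p:ℕ)+1) : ℕ):ℂ) * b ((p:ℕ)+1) ^ ((c:ℕ) - (p:ℕ)) else 0 with hT
  set U : Matrix (Fin (q:ℕ)) (Fin (m - (q:ℕ))) ℂ := Matrix.of fun p c =>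
    (((j+(q:ℕ)+(c:ℕ)+2).choose (j+(p:ℕ)+1) : ℕ):ℂ) * b ((p:ℕ)+1) ^ ((q:ℕ)+(c:ℕ)+1-(p:ℕ)) with hU
  have hgl : ∀ p : Fin (q:ℕ), ((g (Sum.inl p) : Fin m) : ℕ) = (p:ℕ) := by
    intro p; simp [g]
  have hgr : ∀ c : Fin (m - (q:ℕ)), ((g (Sum.inr c) : Fin m) : ℕ) = (q:ℕ) + (c:ℕ) := by
    intro c; simp [g]
  have hblock : ((Nmat j (m+1) b).submatrix Fin.succ q.succAbove).submatrix g g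
      = Matrix.fromBlocks T U 0 (Nmat (j + (q:ℕ) + 1) (m - (q:ℕ)) (fun i => b ((q:ℕ) + 1 + i))) := by
    ext i k
    have hval : ∀ (i k : Fin (m+1)), Nmat j (m+1) b i k =
        if (i : ℕ) ≤ (k : ℕ) + 1 then
          (((j + (k:ℕ) + 1).choose (j + (i:ℕ)) : ℕ) : ℂ) * b (i:ℕ) ^ ((k:ℕ) + 1 - (i:ℕ)) else 0 :=
      fun i k => rfl
    cases i with
    | inl p =>
      cases k with
      | inl c =>
        have h1 : ((Fin.succ (g (Sum.inl p)) : Fin (m+1)) : ℕ) = (p:ℕ) + 1 := by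
          simp [hgl p]
        have h2 : ((q.succAbove (g (Sum.inl c)) : Fin (m+1)) : ℕ) = (c:ℕ) := by
          rw [succAbove_val, hgl c, if_pos c.isLt]
        simp only [Matrix.submatrix_apply, Matrix.fromBlocks_apply₁₁, hval, h1, h2, hT,
          Matrix.of_apply]
        by_cases hpc : (p:ℕ) ≤ (c:ℕ)
        · rw [if_pos (by omega), if_pos hpc]
          have : (c:ℕ) + 1 - ((p:ℕ)+1) = (c:ℕ) - (p:ℕ) := by omega
          rw [this]
          ring_nf
        · rw [if_neg (by omega), if_neg hpc]
      | inr c =>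
        have h1 : ((Fin.succ (g (Sum.inl p)) : Fin (m+1)) : ℕ) = (p:ℕ) + 1 := by
          simp [hgl p]
        have h2 : ((q.succAbove (g (Sum.inr c)) : Fin (m+1)) : ℕ) = (q:ℕ) + (c:ℕ) + 1 := by
          rw [succAbove_val, hgr c, if_neg (by omega)]
        simp only [Matrix.submatrix_apply, Matrix.fromBlocks_apply₁₂, hval, h1, h2, hU,
          Matrix.of_apply]
        rw [if_pos (by have := p.isLt; omega)]
        have e1 : j + ((q:ℕ) + (c:ℕ) + 1) + 1 = j + (q:ℕ) + (c:ℕ) + 2 := by omega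
        have e2 : (q:ℕ) + (c:ℕ) + 1 + 1 - ((p:ℕ)+1) = (q:ℕ)+(c:ℕ)+1-(p:ℕ) := by omega
        have e3 : j + ((p:ℕ)+1) = j + (p:ℕ) + 1 := by omega
        rw [e1, e2, e3]
    | inr p =>
      cases k with
      | inl c =>
        have h1 : ((Fin.succ (g (Sum.inr p)) : Fin (m+1)) : ℕ) = (q:ℕ) + (p:ℕ) + 1 := by
          simp [hgr p]
        have h2 : ((q.succAbove (g (Sum.inl c)) : Fin (m+1)) : ℕ) = (c:ℕ) := by
          rw [succAbove_val, hgl c, if_pos c.isLt]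
        simp only [Matrix.submatrix_apply, Matrix.fromBlocks_apply₂₁, hval, h1, h2,
          Matrix.zero_apply]
        rw [if_neg (by have := c.isLt; omega)]
      | inr c =>
        have h1 : ((Fin.succ (g (Sum.inr p)) : Fin (m+1)) : ℕ) = (q:ℕ) + (p:ℕ) + 1 := by
          simp [hgr p]
        have h2 : ((q.succAbove (g (Sum.inr c)) : Fin (m+1)) : ℕ) = (q:ℕ) + (c:ℕ) + 1 := by
          rw [succAbove_val, hgr c, if_neg (by omega)]
        simp only [Matrix.submatrix_apply, Matrix.fromBlocks_apply₂₂, hval, h1, h2, Nmat,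
          Matrix.of_apply]
        by_cases hpc : (p:ℕ) ≤ (c:ℕ) + 1
        · rw [if_pos (by omega), if_pos hpc]
          have e1 : j + (q:ℕ) + 1 + (c:ℕ) + 1 = j + ((q:ℕ)+(c:ℕ)+1) + 1 := by omega
          have e2 : j + (q:ℕ) + 1 + (p:ℕ) = j + ((q:ℕ)+(p:ℕ)+1) := by omega
          have e3 : (q:ℕ)+(c:ℕ)+1+1 - ((q:ℕ)+(p:ℕ)+1) = (c:ℕ)+1-(p:ℕ) := by omega
          have e4 : (q:ℕ)+1+(p:ℕ) = (q:ℕ)+(p:ℕ)+1 := by omega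
          rw [e1, e2, e3, e4]
        · rw [if_neg (by omega), if_neg hpc]
  rw [hblock, Matrix.det_fromBlocks_zero₂₁]
  have hTdet : T.det = 1 := by
    rw [Matrix.det_of_upperTriangular]
    · apply Finset.prod_eq_one
      intro i _
      simp [hT, Nat.choose_self]
    · intro i k hk
      simp only [hT, Matrix.of_apply]
      rw [if_neg (by exact Nat.not_le.mpr hk)]
  rw [hTdet, one_mul]

lemma key (m : ℕ) : ∀ (j : ℕ) (b : ℕ → ℂ),
    (Nmat j m b).det = (((j+m).choose m : ℕ) : ℂ) * (-1)^m * Hlev m (fun i => b (i:ℕ)) := by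
  induction m using Nat.strong_induction_on with
  | _ m ih =>
    match m with
    | 0 =>
      intro j b
      simp [Nmat, Matrix.det_fin_zero, Hlev]
    | m + 1 =>
      intro j b
      rw [Matrix.det_succ_row_zero]
      have hterm : ∀ q : Fin (m+1),
          (-1:ℂ) ^ (q:ℕ) * (Nmat j (m+1) b) 0 q
            * ((Nmat j (m+1) b).submatrix Fin.succ q.succAbove).det
          = (-1:ℂ) ^ (q:ℕ) * ((((j+(q:ℕ)+1).choose j : ℕ):ℂ) * b 0 ^ ((q:ℕ)+1))
            * ((((j+(q:ℕ)+1+(m-(q:ℕ))).choose (m-(q:ℕ)) : ℕ):ℂ) * (-1)^(m-(q:ℕ))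
              * Hlev (m-(q:ℕ)) (fun i => b ((q:ℕ)+1+(i:ℕ)))) := by
        intro q
        rw [minor_det, ih (m - (q:ℕ)) (by omega)]
        have h0 : (Nmat j (m+1) b) 0 q = (((j+(q:ℕ)+1).choose j : ℕ):ℂ) * b 0 ^ ((q:ℕ)+1) := by
          simp [Nmat]
        rw [h0]
      rw [Finset.sum_congr rfl (fun q _ => hterm q)]
      rw [Fin.sum_univ_eq_sum_range (fun k =>
        (-1:ℂ) ^ k * ((((j+k+1).choose j : ℕ):ℂ) * b 0 ^ (k+1))
          * ((((j+k+1+(m-k)).choose (m-k) : ℕ):ℂ) * (-1)^(m-k)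
            * Hlev (m-k) (fun i => b (k+1+(i:ℕ)))))]
      rw [Hlev]
      simp only [Fin.val_zero]
      rw [Finset.mul_sum, Finset.mul_sum]
      apply Finset.sum_congr rfl
      intro k hk
      have hkm : k ≤ m := by simpa using Nat.lt_succ_iff.mp (Finset.mem_range.mp hk)
      have hHeq : Hlev (m-k) (fun i => b (k+1+(i:ℕ)))
          = Hlev (m-k) (fun i => (fun i : Fin (m+1) => b (i:ℕ)) ⟨k+1+i.1, by have := i.isLt; omega⟩) := rfl
      rw [← hHeq]
      have e1 : j + k + 1 + (m - k) = j + m + 1 := by omega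
      rw [e1]
      -- now a pure scalar identity
      have hfac1 : ((k+1).factorial : ℂ) ≠ 0 := Nat.cast_ne_zero.mpr (Nat.factorial_ne_zero _)
      have hfac2 : ((m-k).factorial : ℂ) ≠ 0 := Nat.cast_ne_zero.mpr (Nat.factorial_ne_zero _)
      have hchoose : (((j+k+1).choose j : ℕ):ℂ) * (((j+m+1).choose (m-k) : ℕ):ℂ)
            * ((k+1).factorial : ℂ) * ((m-k).factorial : ℂ)
          = (((j+m+1).choose (m+1) : ℕ):ℂ) * ((m+1).factorial : ℂ) := by
        have h1 : (j+k+1).choose j * j.factorial * (k+1).factorial = (j+k+1).factorial := by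
          have := Nat.choose_mul_factorial_mul_factorial (show j ≤ j+k+1 by omega)
          simpa [show j+k+1-j = k+1 by omega] using this
        have h2 : (j+m+1).choose (m-k) * (m-k).factorial * (j+k+1).factorial
            = (j+m+1).factorial := by
          have := Nat.choose_mul_factorial_mul_factorial (show m-k ≤ j+m+1 by omega)
          simpa [show j+m+1-(m-k) = j+k+1 by omega] using this
        have h3 : (j+m+1).choose (m+1) * (m+1).factorial * j.factorial
            = (j+m+1).factorial := by
          have := Nat.choose_mul_factorial_mul_factorial (show m+1 ≤ j+m+1 by omega)
          simpa [show j+m+1-(m+1) = j by omega] using this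
        have hj : (j.factorial : ℂ) ≠ 0 := Nat.cast_ne_zero.mpr (Nat.factorial_ne_zero _)
        have hjk : ((j+k+1).factorial : ℂ) ≠ 0 := Nat.cast_ne_zero.mpr (Nat.factorial_ne_zero _)
        have e1' : (((j+k+1).choose j : ℕ):ℂ) * (j.factorial:ℂ) * ((k+1).factorial:ℂ)
            = ((j+k+1).factorial:ℂ) := by exact_mod_cast congrArg (Nat.cast : ℕ → ℂ) h1
        have e2' : (((j+m+1).choose (m-k) : ℕ):ℂ) * ((m-k).factorial:ℂ) * ((j+k+1).factorial:ℂ)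
            = ((j+m+1).factorial:ℂ) := by exact_mod_cast congrArg (Nat.cast : ℕ → ℂ) h2
        have e3' : (((j+m+1).choose (m+1) : ℕ):ℂ) * ((m+1).factorial:ℂ) * (j.factorial:ℂ)
            = ((j+m+1).factorial:ℂ) := by exact_mod_cast congrArg (Nat.cast : ℕ → ℂ) h3
        apply mul_right_cancel₀ (mul_ne_zero hj hjk)
        linear_combination (((j+m+1).choose (m-k) : ℕ):ℂ) * ((m-k).factorial:ℂ)
            * ((j+k+1).factorial:ℂ) * e1' + ((j+k+1).factorial:ℂ) * e2'
            - ((j+k+1).factorial:ℂ) * e3'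
      have hsign : (-1:ℂ)^k * (-1:ℂ)^(m-k) = (-1:ℂ)^m := by
        rw [← pow_add]; congr 1; omega
      set H := Hlev (m-k) (fun i => (fun i : Fin (m+1) => b (i:ℕ)) ⟨k+1+i.1, by have := i.isLt; omega⟩)
      rw [show j+(m+1)=j+m+1 from by omega, pow_succ]
      field_simp
      rw [pow_succ]
      linear_combination ((((j+k+1).choose j : ℕ):ℂ) * (((j+m+1).choose (m-k) : ℕ):ℂ)
          * (b 0 ^ k * b 0) * H * (((k+1).factorial:ℂ) * ((m-k).factorial:ℂ))) * hsign
        + ((-1:ℂ)^m * (b 0 ^ k * b 0) * H) * hchoose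

theorem stmt1 (n : ℕ) (hn : 1 ≤ n) (a : Fin n → ℂ) :
    Hlev n a =
      (-1 : ℂ) ^ n * Matrix.det (Matrix.of fun i j : Fin n =>
        if (i : ℕ) ≤ (j : ℕ) + 1 then
          ((((j : ℕ) + 1).choose (i : ℕ) : ℕ) : ℂ) * a i ^ ((j : ℕ) + 1 - (i : ℕ))
        else 0) := by
  set b : ℕ → ℂ := fun i => if h : i < n then a ⟨i, h⟩ else 0 with hb
  have hM : (Matrix.of fun i j : Fin n =>
        if (i : ℕ) ≤ (j : ℕ) + 1 then
          ((((j : ℕ) + 1).choose (i : ℕ) : ℕ) : ℂ) * a i ^ ((j : ℕ) + 1 - (i : ℕ))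
        else 0) = Nmat 0 n b := by
    ext i k
    simp only [Nmat, Matrix.of_apply, hb, zero_add]
    by_cases h : (i:ℕ) ≤ (k:ℕ)+1
    · rw [if_pos h, if_pos h, dif_pos i.isLt, Fin.eta]
    · rw [if_neg h, if_neg h]
  have ha : (fun i : Fin n => b (i:ℕ)) = a := by
    funext i
    simp only [hb, dif_pos i.isLt, Fin.eta]
  rw [hM, key n 0 b, ha, zero_add, Nat.choose_self]
  rw [show ((1:ℕ):ℂ) * (-1)^n * Hlev n a = (-1:ℂ)^n * Hlev n a from by push_cast; ring]
  rw [← mul_assoc, ← pow_add, Even.neg_one_pow ⟨n, by ring⟩, one_mul]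
end

section
/- Let f be a real polynomial of degree n ≥ 2 all of whose complex roots are real. Then f is trivial, i.e. of the form a(X - b)^n for some real a ≠ 0 and b, if and only if the (n-2)nd derivative f^{(n-2)} has a double root, i.e. there exists c with f^{(n-2)}(c) = 0 and f^{(n-1)}(c) = 0. -/
/-!
Write `g = f(X + c)`, so that `f⁽ᵏ⁾(c) = k! · [Xᵏ] g`. The double-root condition says that the
coefficients of `Xⁿ⁻¹` and `Xⁿ⁻²` in `g` vanish; by Vieta these are, up to the leading
coefficient, `e₁` and `e₂` of the real roots `tᵢ` of `g`. Then `∑ tᵢ² = e₁² - 2 e₂ = 0`, so every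
root is `0` and `g = a Xⁿ`, i.e. `f = a (X - c)ⁿ`.
-/

open Polynomial
open scoped Nat

namespace Multiset

section CommSemiring

variable {R : Type*} [CommSemiring R]

theorem esymm_cons_succ (a : R) (s : Multiset R) (k : ℕ) :
    (a ::ₘ s).esymm (k + 1) = s.esymm (k + 1) + a * s.esymm k := by
  simp only [esymm, powersetCard_cons, map_add, sum_add, map_map, Function.comp_def, prod_cons,
    sum_map_mul_left]

theorem esymm_one (s : Multiset R) : s.esymm 1 = s.sum := by
  simp [esymm, powersetCard_one, map_map]

theorem sq_sum_eq_sum_map_sq_add_two_mul_esymm_two (s : Multiset R) :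
    s.sum ^ 2 = (s.map (· ^ 2)).sum + 2 * s.esymm 2 := by
  induction s using Multiset.induction with
  | empty => simp [esymm, powersetCard_zero_right]
  | cons a s ih =>
    rw [sum_cons, map_cons, sum_cons, esymm_cons_succ, esymm_one, add_sq, ih]
    ring

end CommSemiring

theorem eq_zero_of_sum_eq_zero_of_esymm_two_eq_zero {R : Type*} [CommRing R] [LinearOrder R]
    [IsStrictOrderedRing R] {s : Multiset R} (h₁ : s.sum = 0) (h₂ : s.esymm 2 = 0) :
    ∀ x ∈ s, x = 0 := by
  have hsq : (s.map (· ^ 2)).sum = 0 := by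
    simpa [h₁, h₂] using (sq_sum_eq_sum_map_sq_add_two_mul_esymm_two s).symm
  intro x hx
  have hle : x ^ 2 ≤ (s.map (· ^ 2)).sum :=
    single_le_sum (by simp [sq_nonneg]) _ (mem_map_of_mem _ hx)
  exact pow_eq_zero_iff two_ne_zero |>.1 (le_antisymm (hsq ▸ hle) (sq_nonneg x))

end Multiset

namespace Polynomial

theorem iterate_derivative_eval_eq_factorial_mul_coeff_taylor {R : Type*} [CommSemiring R]
    (f : R[X]) (k : ℕ) (c : R) : (derivative^[k] f).eval c = k ! * (taylor c f).coeff k := by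
  rw [taylor_coeff, ← factorial_smul_hasseDeriv, LinearMap.smul_apply, eval_smul, nsmul_eq_mul]

theorem taylor_eq_C_mul_X_pow_iff {R : Type*} [CommRing R] {f : R[X]} {a c : R} {n : ℕ} :
    taylor c f = C a * X ^ n ↔ f = C a * (X - C c) ^ n := by
  rw [← taylor_inj (r := c) (p := f), taylor_mul, taylor_pow, map_sub, taylor_C, taylor_C, taylor_X,
    add_sub_cancel_right]

theorem Splits.eq_C_mul_X_pow_of_coeff_eq_zero {R : Type*} [Field R] [LinearOrder R]
    [IsStrictOrderedRing R] {g : R[X]} (hg : g.Splits) (hn : 2 ≤ g.natDegree)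
    (h₁ : g.coeff (g.natDegree - 1) = 0) (h₂ : g.coeff (g.natDegree - 2) = 0) :
    g = C g.leadingCoeff * X ^ g.natDegree := by
  have hlc : g.leadingCoeff ≠ 0 := leadingCoeff_ne_zero.2 (ne_zero_of_natDegree_gt hn)
  rw [coeff_eq_esymm_roots_of_splits hg (by omega), Nat.sub_sub_self (by omega)] at h₁ h₂
  have hroots : ∀ x ∈ g.roots, x = 0 :=
    Multiset.eq_zero_of_sum_eq_zero_of_esymm_two_eq_zero
      (by simpa [Multiset.esymm_one, hlc] using h₁) (by simpa [hlc] using h₂)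
  conv_lhs => rw [hg.eq_prod_roots, Multiset.eq_replicate_card.2 hroots]
  simp [hg.natDegree_eq_card_roots]

theorem splits_of_forall_aeval_eq_zero_im_eq_zero {f : ℝ[X]}
    (h : ∀ z : ℂ, aeval z f = 0 → z.im = 0) : f.Splits :=
  (IsAlgClosed.splits _).of_splits_map (algebraMap ℝ ℂ) fun z hz ↦
    have hz : aeval z f = 0 := by simpa [aeval_def, eval_map] using isRoot_of_mem_roots hz
    ⟨z.re, Complex.ext rfl (h z hz).symm⟩

end Polynomial

theorem stmt2 (n : ℕ) (hn : 2 ≤ n) (f : Polynomial ℝ) (hdeg : f.natDegree = n)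
    (hreal : ∀ z : ℂ, Polynomial.aeval z f = 0 → z.im = 0) :
    (∃ a b : ℝ, a ≠ 0 ∧ f = Polynomial.C a * (Polynomial.X - Polynomial.C b) ^ n) ↔
      (∃ c : ℝ, (Polynomial.derivative^[n - 2] f).eval c = 0 ∧
        (Polynomial.derivative^[n - 1] f).eval c = 0) := by
  simp only [iterate_derivative_eval_eq_factorial_mul_coeff_taylor, mul_eq_zero, Nat.cast_eq_zero,
    Nat.factorial_ne_zero, false_or]
  constructor
  · rintro ⟨a, b, -, hf⟩
    refine ⟨b, ?_⟩
    rw [taylor_eq_C_mul_X_pow_iff.2 hf, coeff_C_mul_X_pow, coeff_C_mul_X_pow]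
    simp only [if_neg (show n - 2 ≠ n by omega), if_neg (show n - 1 ≠ n by omega), and_self]
  · rintro ⟨c, h₂, h₁⟩
    have hdeg' : (taylor c f).natDegree = n := (natDegree_taylor f c).trans hdeg
    have htaylor := ((splits_of_forall_aeval_eq_zero_im_eq_zero hreal).taylor c
      |>.eq_C_mul_X_pow_of_coeff_eq_zero (hdeg' ▸ hn) (hdeg' ▸ h₁) (hdeg' ▸ h₂))
    rw [hdeg', leadingCoeff_taylor] at htaylor
    exact ⟨f.leadingCoeff, c, leadingCoeff_ne_zero.2 (ne_zero_of_natDegree_gt (hdeg ▸ hn)),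
      taylor_eq_C_mul_X_pow_iff.1 htaylor⟩
end

section
/- Let f be a complex polynomial, m ≥ 0 an integer, and z ∈ ℂ with f(z) ≠ 0. Then the m-th derivative at z of the logarithmic derivative w ↦ f'(w)/f(w) satisfies (f'/f)^{(m)}(z) = Σ_{j=0}^{m} ((-1)^j/(j+1)) · binom(m+1, j+1) · ( (f^{j+1})^{(m+1)}(z) ) / f(z)^{j+1}, where (f^{j+1})^{(m+1)} denotes the (m+1)-st derivative of the polynomial f raised to the power j+1. -/
/-!
Rescale `f` to `g = f / f(z)`, so that `g(z) = 1` and `g'/g = f'/f`. For the polynomial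
`T = logTaylorAtOne m` one has `g · (T ∘ g)' = g' · (1 - (1 - g)^(m+1))`, hence near `z`
`g'/g = (T ∘ g)' + (1 - g)^(m+1) · g'/g`.
The factor `(1 - g)^(m+1)` vanishes to order `m + 1` at `z`, so by the Leibniz rule the `m`-th
derivative of the last term vanishes at `z`, leaving `(T ∘ g)^(m+1)(z)`, which expands to the
right-hand side.
-/

open Polynomial Finset Topology

namespace Polynomial

section IteratedDeriv

variable {𝕜 : Type*} [NontriviallyNormedField 𝕜]

theorem contDiff_eval (p : 𝕜[X]) (n : WithTop ℕ∞) : ContDiff 𝕜 n fun x => p.eval x := by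
  simpa using p.contDiff_aeval (𝕜 := 𝕜) n

theorem iteratedDeriv_eval (p : 𝕜[X]) (n : ℕ) :
    iteratedDeriv n (fun x => p.eval x) = fun x => (derivative^[n] p).eval x := by
  induction n generalizing p with
  | zero => simp
  | succ n ih =>
    have hderiv : deriv (fun x => p.eval x) = fun x => (derivative p).eval x := by
      ext; exact p.deriv
    rw [iteratedDeriv_succ', hderiv, ih, Function.iterate_succ_apply]

theorem eval_iterate_derivative_eq_zero_of_pow_dvd {p : 𝕜[X]} {z : 𝕜} {i k : ℕ}
    (hp : (X - C z) ^ k ∣ p) (hi : i < k) : (derivative^[i] p).eval z = 0 := by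
  obtain ⟨r, hr⟩ := pow_sub_dvd_iterate_derivative_of_pow_dvd i hp
  rw [hr, eval_mul, eval_pow, eval_sub, eval_X, eval_C, sub_self, zero_pow (by omega), zero_mul]

theorem iteratedDeriv_eval_mul_eq_zero_of_pow_dvd {p : 𝕜[X]} {z : 𝕜} {k : ℕ}
    (hp : (X - C z) ^ (k + 1) ∣ p) {s : 𝕜 → 𝕜} (hs : ContDiffAt 𝕜 k s z) :
    iteratedDeriv k (fun w => p.eval w * s w) z = 0 := by
  rw [iteratedDeriv_fun_mul (p.contDiff_eval k).contDiffAt hs]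
  refine sum_eq_zero fun i hi => ?_
  have hik : i < k + 1 := mem_range.mp hi
  simp [iteratedDeriv_eval, eval_iterate_derivative_eq_zero_of_pow_dvd hp hik]

end IteratedDeriv

section LogTaylor

variable (K : Type*) [Field K]

/-- Up to an additive constant, the Taylor polynomial of degree `m + 1` of `log` at `1`:
its derivative is `(1 - (1 - X)^(m+1)) / X = ∑_{k ≤ m} (1 - X)^k`. -/
noncomputable def logTaylorAtOne (m : ℕ) : K[X] :=
  ∑ i ∈ range (m + 1),
    C ((-1 : K) ^ i / ((i : K) + 1) * ((m + 1).choose (i + 1) : K)) * X ^ (i + 1)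

theorem X_mul_derivative_logTaylorAtOne [CharZero K] (m : ℕ) :
    X * derivative (logTaylorAtOne K m) = 1 - (1 - X) ^ (m + 1) := by
  have hbinom : (1 - X : K[X]) ^ (m + 1)
      = 1 - ∑ i ∈ range (m + 1), C ((-1) ^ i * ((m + 1).choose (i + 1) : K)) * X ^ (i + 1) := by
    rw [sub_eq_neg_add (1 : K[X]), add_pow, sum_range_succ']
    simp only [one_pow, mul_one, Nat.choose_zero_right, pow_zero, Nat.cast_one, C_mul, C_pow,
      C_neg, C_1, C_eq_natCast]
    rw [sub_eq_add_neg, ← sum_neg_distrib, add_comm]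
    congr 1
    refine sum_congr rfl fun i _ => ?_
    ring
  rw [hbinom, sub_sub_cancel, logTaylorAtOne, derivative_sum, mul_sum]
  refine sum_congr rfl fun i _ => ?_
  have hcoeff : (-1 : K) ^ i / ((i : K) + 1) * ((m + 1).choose (i + 1) : K) * ((i + 1 : ℕ) : K)
      = (-1) ^ i * ((m + 1).choose (i + 1) : K) := by
    push_cast
    field_simp
  rw [derivative_C_mul_X_pow, Nat.add_sub_cancel, hcoeff]
  ring

variable {K}

theorem mul_derivative_logTaylorAtOne_comp [CharZero K] (m : ℕ) (g : K[X]) :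
    g * derivative ((logTaylorAtOne K m).comp g) = derivative g * (1 - (1 - g) ^ (m + 1)) := by
  have h := congrArg (fun p => p.comp g) (X_mul_derivative_logTaylorAtOne K m)
  simp only [mul_comp, X_comp, sub_comp, one_comp, pow_comp] at h
  rw [derivative_comp, ← h]
  ring

end LogTaylor

theorem iteratedDeriv_eval_derivative_div_eval_of_eval_eq_one {𝕜 : Type*}
    [NontriviallyNormedField 𝕜] [CharZero 𝕜] {g : 𝕜[X]} {z : 𝕜} (hg : g.eval z = 1) (m : ℕ) :
    iteratedDeriv m (fun w => (derivative g).eval w / g.eval w) z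
      = (derivative^[m + 1] ((logTaylorAtOne 𝕜 m).comp g)).eval z := by
  set s := fun w => (derivative g).eval w / g.eval w
  have hgz : g.eval z ≠ 0 := by simp [hg]
  have hs : ContDiffAt 𝕜 m s z :=
    (contDiff_eval _ m).contDiffAt.div (contDiff_eval _ m).contDiffAt hgz
  have hdecomp : s =ᶠ[𝓝 z] fun w => (derivative ((logTaylorAtOne 𝕜 m).comp g)).eval w
      + ((1 - g) ^ (m + 1)).eval w * s w := by
    filter_upwards [g.continuous.continuousAt.eventually_ne hgz] with w hw
    have h := congrArg (eval w) (mul_derivative_logTaylorAtOne_comp m g)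
    simp only [s, eval_mul, eval_sub, eval_one, eval_pow] at h ⊢
    field_simp
    linear_combination -h
  have hdvd : (X - C z) ^ (m + 1) ∣ (1 - g) ^ (m + 1) :=
    pow_dvd_pow_of_dvd (dvd_iff_isRoot.mpr (by simp [hg])) _
  rw [hdecomp.iteratedDeriv_eq, iteratedDeriv_fun_add (contDiff_eval _ m).contDiffAt
      ((contDiff_eval _ m).contDiffAt.mul hs), iteratedDeriv_eval_mul_eq_zero_of_pow_dvd hdvd hs,
    iteratedDeriv_eval, add_zero, Function.iterate_succ_apply]

end Polynomial

theorem stmt11 (f : Polynomial ℂ) (m : ℕ) (z : ℂ) (hz : f.eval z ≠ 0) :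
    iteratedDeriv m (fun w : ℂ => (Polynomial.derivative f).eval w / f.eval w) z =
      ∑ j ∈ Finset.range (m + 1),
        ((-1 : ℂ) ^ j / ((j : ℂ) + 1)) * ((m + 1).choose (j + 1) : ℂ) *
          ((Polynomial.derivative^[m + 1] (f ^ (j + 1))).eval z / (f.eval z) ^ (j + 1)) := by
  set g := C (f.eval z)⁻¹ * f
  have hgz : g.eval z = 1 := by simp [g, hz]
  have hlogDeriv : (fun w => (derivative f).eval w / f.eval w)
      = fun w => (derivative g).eval w / g.eval w := by
    ext w
    simp [g, mul_div_mul_left _ _ (inv_ne_zero hz)]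
  rw [hlogDeriv, iteratedDeriv_eval_derivative_div_eval_of_eval_eq_one hgz, logTaylorAtOne,
    Polynomial.sum_comp, iterate_derivative_sum, eval_finsetSum]
  refine sum_congr rfl fun j _ => ?_
  rw [mul_comp, C_comp, X_pow_comp, mul_pow, ← C_pow, ← mul_assoc, ← C_mul,
    iterate_derivative_C_mul, eval_mul, eval_C, inv_pow]
  ring
end

section
/- Let n ≥ 0 and let z, z_0, ..., z_{n-1} be complex numbers. For every α ∈ ℂ with α ≠ 0 and every β ∈ ℂ, the Abel-Goncharov polynomial satisfies the shift-invariance and homogeneity property G_n(αz + β; αz_0 + β, αz_1 + β, ..., αz_{n-1} + β) = α^n · G_n(z; z_0, z_1, ..., z_{n-1}). -/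
/-!
Rearranged, the recurrence says that `G_0, G_1, …` are the unique solution of the unitriangular
system `∑_{k ≤ m} C(m,k) z_k^{m-k} G_k = z^m`. Expanding `(α z_k + β)^{m-k}` binomially and
exchanging the two sums shows that `α^k G_k(z; z_0, …)` solves the system for the nodes
`α z_k + β` at the point `α z + β`, hence equals `G_k(α z + β; α z_0 + β, …)`.
-/

/-- The Abel-Goncharov polynomials, defined by `G_0(z) = 1` and, for `n ≥ 1`,
`G_n(z; z_0, ..., z_{n-1}) = z^n - Σ_{k=0}^{n-1} binom(n, k) · z_k^{n-k} · G_k(z; z_0, ..., z_{k-1})`. -/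
noncomputable def AG : (n : ℕ) → ℂ → (Fin n → ℂ) → ℂ
  | 0, _, _ => 1
  | n + 1, z, w =>
      z ^ (n + 1) - ∑ k ∈ (Finset.range (n + 1)).attach,
        ((n + 1).choose k.1 : ℂ) * (w ⟨k.1, Finset.mem_range.mp k.2⟩) ^ (n + 1 - k.1) *
          AG k.1 z (fun i => w ⟨i.1, by
            have h1 := i.isLt
            have h2 := Finset.mem_range.mp k.2
            omega⟩)
  termination_by n _ _ => n
  decreasing_by exact Finset.mem_range.mp k.2

open Finset

section

variable (z : ℂ) (u : ℕ → ℂ)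

theorem AG_succ_of_seq (n : ℕ) :
    AG (n + 1) z (fun i => u i) = z ^ (n + 1) - ∑ k ∈ range (n + 1),
      ((n + 1).choose k : ℂ) * u k ^ (n + 1 - k) * AG k z (fun i => u i) := by
  rw [AG, ← sum_attach (range (n + 1))]

theorem sum_choose_mul_AG (m : ℕ) :
    ∑ k ∈ range (m + 1), (m.choose k : ℂ) * u k ^ (m - k) * AG k z (fun i => u i) = z ^ m := by
  cases m with
  | zero => simp [AG]
  | succ m => simp [sum_range_succ, AG_succ_of_seq]

theorem eq_AG_of_sum_choose_mul {H : ℕ → ℂ}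
    (hH : ∀ m, ∑ k ∈ range (m + 1), (m.choose k : ℂ) * u k ^ (m - k) * H k = z ^ m) (n : ℕ) :
    H n = AG n z (fun i => u i) := by
  induction n using Nat.strong_induction_on with
  | _ n ih =>
    cases n with
    | zero => simpa [AG] using hH 0
    | succ n =>
      have h := hH (n + 1)
      rw [sum_range_succ] at h
      have hlower : ∀ k ∈ range (n + 1), ((n + 1).choose k : ℂ) * u k ^ (n + 1 - k) * H k =
          ((n + 1).choose k : ℂ) * u k ^ (n + 1 - k) * AG k z (fun i => u i) := fun k hk => by
        rw [ih k (mem_range.mp hk)]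
      rw [AG_succ_of_seq, ← h, sum_congr rfl hlower]
      simp

end

theorem Nat.choose_mul_choose_sub_comm (m k j : ℕ) :
    m.choose k * (m - k).choose j = m.choose j * (m - j).choose k := by
  have hk := Nat.choose_mul (n := m) (Nat.le_add_right k j)
  have hj := Nat.choose_mul (n := m) (Nat.le_add_left j k)
  rw [Nat.add_sub_cancel_left, Nat.choose_symm_add] at hk
  rw [Nat.add_sub_cancel] at hj
  exact hk.symm.trans hj

theorem sum_choose_mul_affine_mul_AG (z a b : ℂ) (u : ℕ → ℂ) (m : ℕ) :
    ∑ k ∈ range (m + 1), (m.choose k : ℂ) * (a * u k + b) ^ (m - k) *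
      (a ^ k * AG k z (fun i => u i)) = (a * z + b) ^ m := by
  calc _ = ∑ k ∈ range (m + 1), ∑ j ∈ range (m - k + 1), (m.choose j : ℂ) * b ^ j * a ^ (m - j) *
          ((m - j).choose k * u k ^ (m - j - k) * AG k z (fun i => u i)) := by
        refine sum_congr rfl fun k hk => ?_
        rw [add_comm, add_pow, mul_sum, sum_mul]
        refine sum_congr rfl fun j hj => ?_
        have hkj : k + j ≤ m := by grind
        have hpow : a ^ (m - j) = a ^ (m - k - j) * a ^ k := by rw [← pow_add]; congr 1; omega
        rw [hpow, show m - j - k = m - k - j by omega, mul_pow]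
        have hchoose : (m.choose k : ℂ) * (m - k).choose j = m.choose j * (m - j).choose k := by
          exact_mod_cast Nat.choose_mul_choose_sub_comm m k j
        linear_combination
          b ^ j * a ^ (m - k - j) * u k ^ (m - k - j) * a ^ k * AG k z (fun i => u i) * hchoose
    _ = ∑ j ∈ range (m + 1), ∑ k ∈ range (m - j + 1), (m.choose j : ℂ) * b ^ j * a ^ (m - j) *
          ((m - j).choose k * u k ^ (m - j - k) * AG k z (fun i => u i)) :=
        sum_comm' fun k j => by simp only [mem_range]; omega
    _ = ∑ j ∈ range (m + 1), (m.choose j : ℂ) * b ^ j * a ^ (m - j) * z ^ (m - j) := by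
        simp only [← mul_sum, sum_choose_mul_AG]
    _ = (a * z + b) ^ m := by
        rw [add_comm (a * z), add_pow]
        refine sum_congr rfl fun j _ => ?_
        ring

theorem AG_affine_of_seq (z a b : ℂ) (u : ℕ → ℂ) (n : ℕ) :
    AG n (a * z + b) (fun i => a * u i + b) = a ^ n * AG n z (fun i => u i) :=
  (eq_AG_of_sum_choose_mul _ _ (sum_choose_mul_affine_mul_AG z a b u) n).symm

theorem stmt12_general (n : ℕ) (z : ℂ) (w : Fin n → ℂ) (α β : ℂ) :
    AG n (α * z + β) (fun i => α * w i + β) = α ^ n * AG n z w := by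
  obtain ⟨u, rfl⟩ : ∃ u : ℕ → ℂ, w = fun i : Fin n => u i :=
    ⟨fun i => if h : i < n then w ⟨i, h⟩ else 0, by simp⟩
  exact AG_affine_of_seq z α β u n

theorem stmt12 (n : ℕ) (z : ℂ) (w : Fin n → ℂ) (α β : ℂ) (hα : α ≠ 0) :
    AG n (α * z + β) (fun i => α * w i + β) = α ^ n * AG n z w :=
  stmt12_general n z w α β
end

section
/- There is no monic complex polynomial f of degree n ≥ 2 together with complex numbers z_1, ..., z_{n-1} such that f(0) = 0, f(z_j) = 0 and f^{(j)}(z_j) = 0 for every j ∈ {1, ..., n-1}, and exactly one of z_1, ..., z_{n-1} is nonzero. -/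
open Polynomial

private lemma one_lt_choose_aux {n k : ℕ} (hk : 1 ≤ k) (hkn : k < n) : 1 < n.choose k := by
  cases n with
  | zero => omega
  | succ m =>
    cases k with
    | zero => omega
    | succ j =>
      rw [Nat.choose_succ_succ]
      have h1 : 0 < m.choose j := Nat.choose_pos (by omega)
      have h2 : 0 < m.choose j.succ := Nat.choose_pos (by omega)
      omega

theorem stmt13 :
    ¬ ∃ (n : ℕ) (f : Polynomial ℂ) (z : ℕ → ℂ),
      2 ≤ n ∧ f.Monic ∧ f.natDegree = n ∧ f.eval 0 = 0 ∧
      (∀ j ∈ Finset.Icc 1 (n - 1),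
        f.eval (z j) = 0 ∧ (Polynomial.derivative^[j] f).eval (z j) = 0) ∧
      (∃! j : ℕ, j ∈ Finset.Icc 1 (n - 1) ∧ z j ≠ 0) := by
  rintro ⟨n, f, z, hn, hm, hdeg, h0, hder, k, ⟨hkmem, hkz⟩, huniq⟩
  have hk1 : 1 ≤ k := (Finset.mem_Icc.mp hkmem).1
  have hkn : k ≤ n - 1 := (Finset.mem_Icc.mp hkmem).2
  have hklt : k < n := by omega
  set a := z k with ha
  have hz0 : ∀ j ∈ Finset.Icc 1 (n - 1), j ≠ k → z j = 0 := by
    intro j hj hjk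
    by_contra h
    exact hjk (huniq j ⟨hj, h⟩)
  have hcoeff : ∀ j, j ≠ k → j ≠ n → f.coeff j = 0 := by
    intro j hjk hjn
    rcases Nat.lt_or_ge j n with hlt | hge
    · rcases Nat.eq_zero_or_pos j with rfl | hj1
      · rw [coeff_zero_eq_eval_zero]; exact h0
      · have hjm : j ∈ Finset.Icc 1 (n - 1) := Finset.mem_Icc.mpr ⟨hj1, by omega⟩
        have hd := (hder j hjm).2
        rw [hz0 j hjm hjk, ← coeff_zero_eq_eval_zero, coeff_iterate_derivative] at hd
        simp only [Nat.zero_add, nsmul_eq_mul] at hd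
        have hfac : ((j.descFactorial j : ℂ)) ≠ 0 := by
          rw [Nat.descFactorial_self]
          exact_mod_cast j.factorial_ne_zero
        exact (mul_eq_zero.mp hd).resolve_left hfac
    · exact coeff_eq_zero_of_natDegree_lt (by omega)
  set c := f.coeff k with hc
  have hf : f = X ^ n + C c * X ^ k := by
    ext i
    rcases eq_or_ne i n with rfl | hin
    · have h1 : f.coeff i = 1 := by rw [← hdeg]; exact hm.coeff_natDegree
      rw [h1, coeff_add, coeff_X_pow, coeff_C_mul, coeff_X_pow, if_pos rfl,
        if_neg (by omega : ¬ i = k), mul_zero, add_zero]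
    · rcases eq_or_ne i k with rfl | hik
      · rw [coeff_add, coeff_X_pow, coeff_C_mul, coeff_X_pow, if_neg hin,
          if_pos rfl, mul_one, zero_add]
      · rw [hcoeff i hik hin, coeff_add, coeff_X_pow, coeff_C_mul, coeff_X_pow,
          if_neg hin, if_neg hik, mul_zero, add_zero]
  have heval : a ^ n + c * a ^ k = 0 := by
    have h1 := (hder k hkmem).1
    rwa [hf, eval_add, eval_mul, eval_pow, eval_C, eval_pow, eval_X] at h1
  have hderiv : (n.descFactorial k : ℂ) * a ^ (n - k) + c * (k.factorial : ℂ) = 0 := by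
    have h2 := (hder k hkmem).2
    rw [hf, iterate_map_add, iterate_derivative_C_mul,
      iterate_derivative_X_pow_eq_smul, iterate_derivative_X_pow_eq_smul] at h2
    simp only [eval_add, eval_mul, eval_smul, eval_pow, eval_X, eval_C, smul_eq_mul,
      Nat.sub_self, pow_zero, mul_one, eval_one, Nat.descFactorial_self] at h2
    linear_combination h2
  have hpow : a ^ (n - k) * a ^ k = a ^ n := by
    rw [← pow_add]; congr 1; omega
  have hak : a ^ k ≠ 0 := pow_ne_zero _ hkz
  have hc_eq : c = -a ^ (n - k) := by
    apply mul_right_cancel₀ hak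
    rw [neg_mul, hpow]
    linear_combination heval
  rw [hc_eq] at hderiv
  have hank : a ^ (n - k) ≠ 0 := pow_ne_zero _ hkz
  have hfin : (n.descFactorial k : ℂ) = (k.factorial : ℂ) := by
    have hmul : ((n.descFactorial k : ℂ) - (k.factorial : ℂ)) * a ^ (n - k) = 0 := by
      linear_combination hderiv
    exact sub_eq_zero.mp ((mul_eq_zero.mp hmul).resolve_right hank)
  have hnat : n.descFactorial k = k.factorial := by exact_mod_cast hfin
  rw [Nat.descFactorial_eq_factorial_mul_choose] at hnat
  have hch : n.choose k = 1 :=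
    Nat.eq_of_mul_eq_mul_left k.factorial_pos (hnat.trans (Nat.mul_one _).symm)
  have := one_lt_choose_aux hk1 hklt
  omega
end

section
/- Let f be a monic complex polynomial of degree n ≥ 2 with distinct roots λ_1, ..., λ_k, let z_{n-1} be the unique root of f^{(n-1)}, and let g = f' / gcd(f, f'). Then Σ_{j=1}^{k} λ_j equals the sum of the roots of g counted with multiplicity plus z_{n-1}. -/
open Polynomial

/-! Since `gcd f f'` has root multiplicities `r_j - 1`, the roots of `f' = gcd f f' * g` are the
roots of `f` with one copy of each distinct root removed, together with the roots of `g`. Hence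
`∑ λ_j = ∑ roots g + (∑ roots f - ∑ roots f')`, and the bracket is the centroid `z_{n-1}`:
comparing the two top coefficients shows that differentiation preserves the centroid of the roots,
and `f^{(n-1)}` is linear with root `z_{n-1}`. -/

namespace Polynomial

section Derivative

variable {R : Type*} [Semiring R] [IsAddTorsionFree R]

theorem natDegree_iterate_derivative_eq (p : R[X]) (k : ℕ) :
    (derivative^[k] p).natDegree = p.natDegree - k := by
  induction k with
  | zero => rfl
  | succ k ih => rw [Function.iterate_succ_apply', natDegree_derivative, ih, Nat.sub_sub]

theorem nextCoeff_derivative (p : R[X]) :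
    nextCoeff (derivative p) = nextCoeff p * (p.natDegree - 1 : ℕ) := by
  rcases lt_or_ge p.natDegree 2 with hp | hp
  · have hp' : (derivative p).natDegree = 0 := by rw [natDegree_derivative]; omega
    simp [nextCoeff, hp', show p.natDegree - 1 = 0 by omega]
  · rw [nextCoeff_of_natDegree_pos (by rw [natDegree_derivative]; omega),
      nextCoeff_of_natDegree_pos (by omega), natDegree_derivative, coeff_derivative,
      ← Nat.cast_add_one, Nat.sub_add_cancel (by omega : 1 ≤ p.natDegree - 1)]

end Derivative

theorem roots_eq_singleton_of_natDegree_eq_one {R : Type*} [CommRing R] [IsDomain R] {p : R[X]}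
    (hp : p.natDegree = 1) {z : R} (hz : p.eval z = 0) : p.roots = {z} := by
  have hp0 : p ≠ 0 := by rintro rfl; simp at hp
  refine (Multiset.eq_of_le_of_card_le ?_ ?_).symm
  · exact Multiset.singleton_le.2 ((mem_roots hp0).2 hz)
  · simpa [hp] using card_roots' p

variable {K : Type*} [Field K]

section Gcd

variable [DecidableEq K]

theorem rootMultiplicity_gcd {p q : K[X]} (hp : p ≠ 0) (hq : q ≠ 0) (a : K) :
    rootMultiplicity a (EuclideanDomain.gcd p q) =
      min (rootMultiplicity a p) (rootMultiplicity a q) := by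
  have hpq : EuclideanDomain.gcd p q ≠ 0 := fun h => hp (EuclideanDomain.gcd_eq_zero_iff.1 h).1
  refine eq_of_forall_le_iff fun k => ?_
  rw [le_min_iff, le_rootMultiplicity_iff hpq, le_rootMultiplicity_iff hp,
    le_rootMultiplicity_iff hq]
  exact ⟨fun h => ⟨h.trans (EuclideanDomain.gcd_dvd_left p q),
    h.trans (EuclideanDomain.gcd_dvd_right p q)⟩, fun h => EuclideanDomain.dvd_gcd h.1 h.2⟩

variable [CharZero K]

theorem roots_gcd_derivative {f : K[X]} (hf : derivative f ≠ 0) :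
    (EuclideanDomain.gcd f (derivative f)).roots = f.roots - f.roots.dedup := by
  have hf0 : f ≠ 0 := by rintro rfl; simp at hf
  ext a
  rw [count_roots, Multiset.count_sub, count_roots, Multiset.count_dedup,
    rootMultiplicity_gcd hf0 hf]
  by_cases ha : f.IsRoot a
  · rw [if_pos ((mem_roots hf0).2 ha), derivative_rootMultiplicity_of_root ha]
    omega
  · simp [rootMultiplicity_eq_zero ha]

theorem sum_roots_toFinset_eq {f : K[X]} (hf : derivative f ≠ 0) :
    ∑ x ∈ f.roots.toFinset, x =
      (derivative f / EuclideanDomain.gcd f (derivative f)).roots.sum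
        + (f.roots.sum - (derivative f).roots.sum) := by
  set d := EuclideanDomain.gcd f (derivative f)
  have hd : d ∣ derivative f := EuclideanDomain.gcd_dvd_right _ _
  have hd0 : d ≠ 0 := fun h => hf (zero_dvd_iff.1 (h ▸ hd))
  have hdg : d * (derivative f / d) = derivative f := EuclideanDomain.mul_div_cancel' hd0 hd
  have hroots : (derivative f).roots = d.roots + (derivative f / d).roots := by
    rw [← roots_mul (hdg.symm ▸ hf), hdg]
  have hsum : f.roots.dedup.sum + d.roots.sum = f.roots.sum := by
    rw [roots_gcd_derivative hf, ← Multiset.sum_add, add_tsub_cancel_of_le (Multiset.dedup_le _)]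
  rw [Finset.sum, Multiset.toFinset_val, Multiset.map_id', hroots, Multiset.sum_add]
  linear_combination hsum

end Gcd

variable [CharZero K] [IsAlgClosed K]

theorem natDegree_mul_sum_roots_derivative (p : K[X]) :
    (p.natDegree : K) * (derivative p).roots.sum = (p.natDegree - 1 : ℕ) * p.roots.sum := by
  rcases eq_or_ne p 0 with rfl | hp
  · simp
  have h := (IsAlgClosed.splits (derivative p)).nextCoeff_eq_neg_sum_roots_mul_leadingCoeff
  rw [nextCoeff_derivative, (IsAlgClosed.splits p).nextCoeff_eq_neg_sum_roots_mul_leadingCoeff,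
    leadingCoeff_derivative] at h
  refine mul_left_cancel₀ (leadingCoeff_ne_zero.2 hp) ?_
  linear_combination h

theorem natDegree_mul_sum_roots_iterate_derivative (p : K[X]) {j : ℕ} (hj : j ≤ p.natDegree) :
    (p.natDegree : K) * (derivative^[j] p).roots.sum = (p.natDegree - j : ℕ) * p.roots.sum := by
  induction j with
  | zero => simp
  | succ j ih =>
    have h := natDegree_mul_sum_roots_derivative (derivative^[j] p)
    rw [natDegree_iterate_derivative_eq, ← Function.iterate_succ_apply' derivative,
      Nat.sub_sub] at h
    have hmj : ((p.natDegree - j : ℕ) : K) ≠ 0 := by norm_cast; omega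
    refine mul_left_cancel₀ hmj ?_
    linear_combination (p.natDegree : K) * h + ((p.natDegree - (j + 1) : ℕ) : K) * ih (by omega)

end Polynomial

theorem stmt15_general (n : ℕ) (hn : 2 ≤ n) (f : Polynomial ℂ)
    (hdeg : f.natDegree = n) (z : ℂ)
    (hz : (Polynomial.derivative^[n - 1] f).eval z = 0) :
    ∑ x ∈ f.roots.toFinset, x =
      ((Polynomial.derivative f / EuclideanDomain.gcd f (Polynomial.derivative f)).roots).sum
        + z := by
  have hf' : derivative f ≠ 0 := derivative_ne_zero.2 (by omega)
  have hroots : (derivative^[n - 1] f).roots = {z} :=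
    roots_eq_singleton_of_natDegree_eq_one (by rw [natDegree_iterate_derivative_eq]; omega) hz
  have hcentroid : (n : ℂ) * z = f.roots.sum := by
    have h := natDegree_mul_sum_roots_iterate_derivative f (j := n - 1) (by omega)
    rwa [hroots, hdeg, Multiset.sum_singleton, show n - (n - 1) = 1 by omega, Nat.cast_one,
      one_mul] at h
  have hder : (n : ℂ) * (derivative f).roots.sum = (n - 1) * f.roots.sum := by
    have h := natDegree_mul_sum_roots_derivative f
    rwa [hdeg, Nat.cast_sub (by omega : 1 ≤ n), Nat.cast_one] at h
  rw [sum_roots_toFinset_eq hf', add_right_inj]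
  refine mul_left_cancel₀ (by norm_cast; omega : (n : ℂ) ≠ 0) ?_
  linear_combination -hder - hcentroid

theorem stmt15 (n : ℕ) (hn : 2 ≤ n) (f : Polynomial ℂ) (hf : f.Monic)
    (hdeg : f.natDegree = n) (z : ℂ)
    (hz : (Polynomial.derivative^[n - 1] f).eval z = 0) :
    ∑ x ∈ f.roots.toFinset, x =
      ((Polynomial.derivative f / EuclideanDomain.gcd f (Polynomial.derivative f)).roots).sum
        + z :=
  stmt15_general n hn f hdeg z hz
end
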